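/- Let (S, A, P, r, γ) be a finite MDP with γ ∈ [0,1), optimal Q-function Q* (the unique fixed point of the Bellman optimality operator), and let b_1,…,b_N ∈ ℝ be constant shifts. Consider the dummy-adversary game Bellman operator (maxmin version) F on Q : S × A × {1,…,N} → ℝ given by (FQ)(s,a,i) = Σ_{s'} P(s,a,s') ( r(s,a,s') + b_i + γ max_{a'∈A} min_{j∈{1,…,N}} Q(s',a',j) ). Then the function Q̂ defined by Q̂(s,a,i) = Q*(s,a) + b_i + γ (min_{k∈{1,…,N}} b_k)/(1−γ) is a fixed point of F, and since F is a γ-contraction in the sup norm it is the unique fixed point; moreover min_{i} Q̂(s,a,i) = Q*(s,a) + (min_k b_k)/(1−γ) for all (s,a). -/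
import Mathlib


/-- Maximum of a real-valued function over a nonempty finite type. -/
noncomputable def fsup {β : Type*} [Fintype β] [Nonempty β] (f : β → ℝ) : ℝ :=
  Finset.univ.sup' Finset.univ_nonempty f

/-- Minimum of a real-valued function over a nonempty finite type. -/
noncomputable def finf {β : Type*} [Fintype β] [Nonempty β] (f : β → ℝ) : ℝ :=
  Finset.univ.inf' Finset.univ_nonempty f

/-- The Bellman optimality operator of a finite MDP. -/
noncomputable def bellman {S A : Type*} [Fintype S] [Nonempty S] [Fintype A] [Nonempty A]
    (P : S → A → S → ℝ) (r : S → A → S → ℝ) (γ : ℝ) (Q : S → A → ℝ) : S → A → ℝ :=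
  fun s a => ∑ s', P s a s' * (r s a s' + γ * fsup (fun a' => Q s' a'))

/-- The dummy-adversary game Bellman operator (maxmin version) with constant shifts
`b i`. -/
noncomputable def daqBellman {S A : Type*} [Fintype S] [Nonempty S] [Fintype A] [Nonempty A]
    {N : ℕ} [NeZero N]
    (P : S → A → S → ℝ) (r : S → A → S → ℝ) (γ : ℝ) (b : Fin N → ℝ)
    (Q : S → A → Fin N → ℝ) : S → A → Fin N → ℝ :=
  fun s a i => ∑ s', P s a s' *
    (r s a s' + b i + γ * fsup (fun a' => finf (fun j => Q s' a' j)))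
lemma finf_le' {β : Type*} [Fintype β] [Nonempty β] (f : β → ℝ) (x : β) : finf f ≤ f x :=
  Finset.inf'_le _ (Finset.mem_univ x)

lemma le_fsup' {β : Type*} [Fintype β] [Nonempty β] (f : β → ℝ) (x : β) : f x ≤ fsup f :=
  Finset.le_sup' _ (Finset.mem_univ x)

lemma le_finf' {β : Type*} [Fintype β] [Nonempty β] {f : β → ℝ} {c : ℝ} (h : ∀ x, c ≤ f x) :
    c ≤ finf f := Finset.le_inf' _ _ (fun x _ => h x)

lemma fsup_le' {β : Type*} [Fintype β] [Nonempty β] {f : β → ℝ} {c : ℝ} (h : ∀ x, f x ≤ c) :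
    fsup f ≤ c := Finset.sup'_le _ _ (fun x _ => h x)

lemma finf_add_const {β : Type*} [Fintype β] [Nonempty β] (f : β → ℝ) (c : ℝ) :
    finf (fun x => f x + c) = finf f + c := by
  obtain ⟨x, -, hx⟩ := Finset.exists_mem_eq_inf' (Finset.univ_nonempty (α := β)) f
  apply le_antisymm
  · calc finf (fun x => f x + c) ≤ f x + c := finf_le' _ x
      _ = finf f + c := by rw [finf, ← hx]
  · exact le_finf' (fun y => by have := finf_le' f y; linarith)

lemma fsup_add_const {β : Type*} [Fintype β] [Nonempty β] (f : β → ℝ) (c : ℝ) :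
    fsup (fun x => f x + c) = fsup f + c := by
  obtain ⟨x, -, hx⟩ := Finset.exists_mem_eq_sup' (Finset.univ_nonempty (α := β)) f
  apply le_antisymm
  · exact fsup_le' (fun y => by have := le_fsup' f y; linarith)
  · calc fsup f + c = f x + c := by rw [fsup, hx]
      _ ≤ fsup (fun x => f x + c) := le_fsup' (fun x => f x + c) x

lemma abs_fsup_sub_fsup {β : Type*} [Fintype β] [Nonempty β] {f g : β → ℝ} {M : ℝ}
    (h : ∀ x, |f x - g x| ≤ M) : |fsup f - fsup g| ≤ M := by
  rw [abs_sub_le_iff]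
  constructor
  · have : fsup f ≤ fsup g + M := fsup_le' fun x => by
      have h1 := h x; rw [abs_sub_le_iff] at h1
      have := le_fsup' g x; linarith
    linarith
  · have : fsup g ≤ fsup f + M := fsup_le' fun x => by
      have h1 := h x; rw [abs_sub_le_iff] at h1
      have := le_fsup' f x; linarith
    linarith

lemma abs_finf_sub_finf {β : Type*} [Fintype β] [Nonempty β] {f g : β → ℝ} {M : ℝ}
    (h : ∀ x, |f x - g x| ≤ M) : |finf f - finf g| ≤ M := by
  rw [abs_sub_le_iff]
  constructor
  · obtain ⟨x, -, hx⟩ := Finset.exists_mem_eq_inf' (Finset.univ_nonempty (α := β)) g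
    have hg : finf g = g x := hx
    have h1 := h x; rw [abs_sub_le_iff] at h1
    have := finf_le' f x; linarith
  · obtain ⟨x, -, hx⟩ := Finset.exists_mem_eq_inf' (Finset.univ_nonempty (α := β)) f
    have hf : finf f = f x := hx
    have h1 := h x; rw [abs_sub_le_iff] at h1
    have := finf_le' g x; linarith

/-- The unique fixed point of the dummy-adversary game Bellman operator (maxmin
version) is `Q̂(s,a,i) = Q*(s,a) + b i + γ (min_k b k)/(1-γ)`, and its minimum over
the adversary action satisfies `min_i Q̂(s,a,i) = Q*(s,a) + (min_k b k)/(1-γ)`. -/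
theorem daq_game_fixed_point
    {S A : Type*} [Fintype S] [Nonempty S] [Fintype A] [Nonempty A]
    {N : ℕ} [NeZero N]
    (P : S → A → S → ℝ) (hP0 : ∀ s a s', 0 ≤ P s a s')
    (hP1 : ∀ s a, ∑ s', P s a s' = 1)
    (r : S → A → S → ℝ) (γ : ℝ) (hγ : γ ∈ Set.Ico (0 : ℝ) 1)
    (b : Fin N → ℝ)
    (Qstar : S → A → ℝ) (hQstar : bellman P r γ Qstar = Qstar)
    (Qhat : S → A → Fin N → ℝ)
    (hQhat : ∀ s a i, Qhat s a i = Qstar s a + b i + γ * finf b / (1 - γ)) :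
    daqBellman P r γ b Qhat = Qhat ∧
    (∀ Q' : S → A → Fin N → ℝ, daqBellman P r γ b Q' = Q' → Q' = Qhat) ∧
    (∀ s a, finf (fun i => Qhat s a i) = Qstar s a + finf b / (1 - γ)) := by
  obtain ⟨hγ0, hγ1⟩ := hγ
  have h1γ : (1 : ℝ) - γ ≠ 0 := by linarith
  -- the value used in the inner max-min for Q̂
  have hV : ∀ s', fsup (fun a' => finf (fun j => Qhat s' a' j))
      = fsup (fun a' => Qstar s' a') + finf b / (1 - γ) := by
    intro s'
    have h1 : ∀ a', finf (fun j => Qhat s' a' j)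
        = Qstar s' a' + (finf b + γ * finf b / (1 - γ)) := by
      intro a'
      have he : (fun j => Qhat s' a' j)
          = (fun j => b j + (Qstar s' a' + γ * finf b / (1 - γ))) := by
        funext j; rw [hQhat]; ring
      rw [he, finf_add_const]; ring
    have he2 : (fun a' => finf (fun j => Qhat s' a' j))
        = (fun a' => Qstar s' a' + (finf b + γ * finf b / (1 - γ))) := by
      funext a'; exact h1 a'
    rw [he2, fsup_add_const]
    have : finf b + γ * finf b / (1 - γ) = finf b / (1 - γ) := by
      field_simp; ring
    rw [this]
  -- fixed point
  have hfix : daqBellman P r γ b Qhat = Qhat := by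
    funext s a i
    have hb : bellman P r γ Qstar s a = Qstar s a := by rw [hQstar]
    simp only [daqBellman]
    have hterm : ∀ s', P s a s' * (r s a s' + b i +
        γ * fsup (fun a' => finf (fun j => Qhat s' a' j)))
        = P s a s' * (r s a s' + γ * fsup (fun a' => Qstar s' a'))
          + P s a s' * (b i + γ * (finf b / (1 - γ))) := by
      intro s'; rw [hV s']; ring
    rw [Finset.sum_congr rfl (fun s' _ => hterm s'), Finset.sum_add_distrib,
      ← Finset.sum_mul, hP1 s a, one_mul]
    have : (∑ s', P s a s' * (r s a s' + γ * fsup (fun a' => Qstar s' a'))) = Qstar s a := hb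
    rw [this, hQhat]
    have : γ * (finf b / (1 - γ)) = γ * finf b / (1 - γ) := by ring
    rw [this]; ring
  refine ⟨hfix, ?_, ?_⟩
  · -- uniqueness via contraction
    intro Q' hQ'
    set M : ℝ := fsup (fun p : S × A × Fin N => |Q' p.1 p.2.1 p.2.2 - Qhat p.1 p.2.1 p.2.2|) with hM
    have hM0 : 0 ≤ M := by
      obtain ⟨p⟩ : Nonempty (S × A × Fin N) := inferInstance
      calc (0:ℝ) ≤ |Q' p.1 p.2.1 p.2.2 - Qhat p.1 p.2.1 p.2.2| := abs_nonneg _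
        _ ≤ M := le_fsup' (fun p : S × A × Fin N =>
            |Q' p.1 p.2.1 p.2.2 - Qhat p.1 p.2.1 p.2.2|) p
    have hbound : ∀ s a i, |Q' s a i - Qhat s a i| ≤ γ * M := by
      intro s a i
      have e1 : Q' s a i = daqBellman P r γ b Q' s a i := by rw [hQ']
      have e2 : Qhat s a i = daqBellman P r γ b Qhat s a i := by rw [hfix]
      rw [e1, e2]
      simp only [daqBellman]
      rw [← Finset.sum_sub_distrib]
      have hterm : ∀ s' : S, P s a s' * (r s a s' + b i +
            γ * fsup (fun a' => finf (fun j => Q' s' a' j)))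
          - P s a s' * (r s a s' + b i +
            γ * fsup (fun a' => finf (fun j => Qhat s' a' j)))
          = P s a s' * γ * (fsup (fun a' => finf (fun j => Q' s' a' j))
            - fsup (fun a' => finf (fun j => Qhat s' a' j))) := by
        intro s'; ring
      rw [Finset.sum_congr rfl (fun s' _ => hterm s')]
      calc |∑ s', P s a s' * γ * (fsup (fun a' => finf (fun j => Q' s' a' j))
            - fsup (fun a' => finf (fun j => Qhat s' a' j)))|
          ≤ ∑ s', |P s a s' * γ * (fsup (fun a' => finf (fun j => Q' s' a' j))
            - fsup (fun a' => finf (fun j => Qhat s' a' j)))| :=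
            Finset.abs_sum_le_sum_abs _ _
        _ ≤ ∑ s', P s a s' * γ * M := by
            apply Finset.sum_le_sum
            intro s' _
            rw [abs_mul, abs_of_nonneg (mul_nonneg (hP0 s a s') hγ0)]
            apply mul_le_mul_of_nonneg_left _ (mul_nonneg (hP0 s a s') hγ0)
            apply abs_fsup_sub_fsup
            intro a'
            apply abs_finf_sub_finf
            intro j
            exact le_fsup' (fun p : S × A × Fin N =>
              |Q' p.1 p.2.1 p.2.2 - Qhat p.1 p.2.1 p.2.2|) (s', a', j)
        _ = γ * M := by
            rw [← Finset.sum_mul, ← Finset.sum_mul, hP1 s a, one_mul]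
    have hMle : M ≤ γ * M := by
      apply fsup_le'
      intro p
      exact hbound p.1 p.2.1 p.2.2
    have hMz : M = 0 := by nlinarith
    funext s a i
    have h := hbound s a i
    rw [hMz, mul_zero] at h
    have := abs_nonneg (Q' s a i - Qhat s a i)
    have : |Q' s a i - Qhat s a i| = 0 := le_antisymm h this
    have := abs_eq_zero.mp this
    linarith
  · intro s a
    have he : (fun i => Qhat s a i)
        = (fun i => b i + (Qstar s a + γ * finf b / (1 - γ))) := by
      funext i; rw [hQhat]; ring
    rw [he, finf_add_const]
    field_simp
    ring
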